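/- Let G=(V,E) be a weighted graph with boundary ∂=A⊔B⊔C and fix integers n≥2 and even m≥2. Then the permutation optimization and set-partition optimization satisfy R ≥ 𝒜(A∪B:C)·n(m−2) + Q, where 𝒜(A∪B:C) is the minimal cut area separating A∪B from C and n(m−2)=d(X,id) is the Cayley distance from X to the identity. -/

import Mathlib

/-!
Fix a feasible configuration `g` and put `φ(v) = d(g v, 1) - d(q_X(g v), q_X(1))`. On every edge,
`d(q_X(g x), q_X(g y)) + |φ x - φ y| ≤ d(g x, g y)`. This comes from the potential
`#(h) - 2 #(P(h) ⊔ Q)`, which changes by at most one when `h` is multiplied by a transposition,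
while a shortest path from `g` to `h` in the Cayley graph takes `d(g, h)` such steps.
Since `P(X)` refines `P(g_A)` and `P(g_B)`, `φ = n(m - 2)` on `A ∪ B` and `φ = 0` on `C`, so
the levels `{φ ≥ t}`, `1 ≤ t ≤ n(m - 2)`, are cuts for `A ∪ B : C`. Summing over the edges gives
`R(g) ≥ Q(q_X ∘ g) + n(m - 2) 𝒜(A ∪ B : C)`.
-/

open scoped Classical

noncomputable section

namespace RTN

/-! ## Set partitions -/

/-- Number of blocks of a set partition (as an integer). -/
def nb {α : Type*} (p : Setoid α) : ℤ := Nat.card (Quotient p)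

/-- The partition distance `d(p,q) = #(p) + #(q) - 2 #(p ⊔ q)`. -/
def pdist {α : Type*} (p q : Setoid α) : ℤ := nb p + nb q - 2 * nb (p ⊔ q)

lemma pdist_comm {α : Type*} (p q : Setoid α) : pdist p q = pdist q p := by
  unfold pdist
  rw [sup_comm p q]
  ring

/-- `k` is a singlet (block of size one) of the partition `p`. -/
def IsSinglet {α : Type*} (p : Setoid α) (k : α) : Prop := ∀ y, p.r k y → y = k

/-- The number of singlets `#₁(p)` of a partition. -/
def nS {α : Type*} (p : Setoid α) : ℤ := Nat.card {k : α // IsSinglet p k}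

/-- The singlet distance `d₁(s₁,s₂) = #₁(s₁) + #₁(s₂) - 2 #₁(s₁ ⊔ s₂)`. -/
def sdist {α : Type*} (s₁ s₂ : Setoid α) : ℤ := nS s₁ + nS s₂ - 2 * nS (s₁ ⊔ s₂)

/-- The singlet pattern `s(p)`: the coarsest partition whose singlets are exactly
those of `p` (all non-singlet elements lie in one block). -/
def spat {α : Type*} (p : Setoid α) : Setoid α where
  r x y := x = y ∨ (¬ IsSinglet p x ∧ ¬ IsSinglet p y)
  iseqv := by
    refine ⟨fun x => Or.inl rfl, ?_, ?_⟩
    · intro x y h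
      rcases h with rfl | ⟨hx, hy⟩
      · exact Or.inl rfl
      · exact Or.inr ⟨hy, hx⟩
    · intro x y z h1 h2
      rcases h1 with rfl | ⟨hx, hy⟩
      · exact h2
      · rcases h2 with rfl | ⟨_, hz⟩
        · exact Or.inr ⟨hx, hy⟩
        · exact Or.inr ⟨hx, hz⟩

/-- The bit `b^k(p)`: `0` if `p` has a singlet at `k`, else `1`. -/
def bbit {α : Type*} (p : Setoid α) (k : α) : ℤ := if IsSinglet p k then 0 else 1

/-- The size of the block of `p` containing `x`. -/
def blockSize {α : Type*} (p : Setoid α) (x : α) : ℕ := Nat.card {y : α // p.r x y}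

noncomputable instance {α : Type*} [Finite α] (s : Setoid α) : Fintype (Quotient s) :=
  Fintype.ofFinite _

/-! ## Permutations -/

/-- The partition of `α` into orbits (cycles) of a permutation. -/
def orbitSetoid {α : Type*} (g : Equiv.Perm α) : Setoid α where
  r x y := ∃ k : ℤ, (g ^ k) x = y
  iseqv := by
    refine ⟨fun x => ⟨0, by simp⟩, ?_, ?_⟩
    · rintro x y ⟨k, rfl⟩
      exact ⟨-k, by simp [← Equiv.Perm.mul_apply, ← zpow_add]⟩
    · rintro x y z ⟨k, rfl⟩ ⟨l, rfl⟩
      exact ⟨l + k, by rw [zpow_add, Equiv.Perm.mul_apply]⟩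

/-- The number of cycles `#(g)` of a permutation (fixed points included). -/
def ncyc {α : Type*} (g : Equiv.Perm α) : ℤ := nb (orbitSetoid g)

/-- The Cayley distance `d(g,h) = N - #(g h⁻¹)`. -/
def cayley {α : Type*} [Fintype α] (g h : Equiv.Perm α) : ℤ :=
  (Fintype.card α : ℤ) - ncyc (g * h⁻¹)

lemma orbitSetoid_inv {α : Type*} (g : Equiv.Perm α) : orbitSetoid g⁻¹ = orbitSetoid g := by
  apply Setoid.ext
  intro x y
  constructor
  · rintro ⟨k, hk⟩
    exact ⟨-k, by rw [← inv_zpow']; exact hk⟩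
  · rintro ⟨k, hk⟩
    exact ⟨-k, by rw [inv_zpow', neg_neg]; exact hk⟩

lemma cayley_comm {α : Type*} [Fintype α] (g h : Equiv.Perm α) : cayley g h = cayley h g := by
  unfold cayley ncyc
  rw [show h * g⁻¹ = (g * h⁻¹)⁻¹ by rw [mul_inv_rev, inv_inv], orbitSetoid_inv]

/-- Coarse graining of a partition `p` by the blocks of `P(g₀)`: the partition of the set
of blocks of `P(g₀)` induced by `p ⊔ P(g₀)`. -/
def coarse {α : Type*} (g₀ : Equiv.Perm α) (p : Setoid α) :
    Setoid (Quotient (orbitSetoid g₀)) where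
  r u v := ∃ x y : α, Quotient.mk (orbitSetoid g₀) x = u ∧ Quotient.mk (orbitSetoid g₀) y = v ∧
    (p ⊔ orbitSetoid g₀).r x y
  iseqv := by
    refine ⟨?_, ?_, ?_⟩
    · intro u
      obtain ⟨x, rfl⟩ := Quotient.exists_rep u
      exact ⟨x, x, rfl, rfl, (p ⊔ orbitSetoid g₀).iseqv.refl x⟩
    · rintro u v ⟨x, y, hx, hy, hxy⟩
      exact ⟨y, x, hy, hx, (p ⊔ orbitSetoid g₀).iseqv.symm hxy⟩
    · rintro u v w ⟨x, y, hx, hy, hxy⟩ ⟨y', z, hy', hz, hyz⟩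
      refine ⟨x, z, hx, hz, ?_⟩
      have h1 : (orbitSetoid g₀).r y y' := Quotient.exact (hy.trans hy'.symm)
      have h2 : (p ⊔ orbitSetoid g₀).r y y' :=
        (le_sup_right : orbitSetoid g₀ ≤ p ⊔ orbitSetoid g₀) h1
      exact (p ⊔ orbitSetoid g₀).iseqv.trans hxy
        ((p ⊔ orbitSetoid g₀).iseqv.trans h2 hyz)

/-- The coarse graining `q_{g₀}(g) ∈ P_{#(g₀)}` of a permutation `g`. -/
def qc {α : Type*} (g₀ g : Equiv.Perm α) : Setoid (Quotient (orbitSetoid g₀)) :=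
  coarse g₀ (orbitSetoid g)

/-! ## Standard reflected-entropy boundary elements -/

/-- `g_B`, the product of `n` disjoint `m`-cycles `(k,ℓ) ↦ (k,ℓ+1)`. -/
def gB (n m : ℕ) : Equiv.Perm (Fin n × Fin m) :=
  Equiv.prodCongr (Equiv.refl (Fin n)) (finRotate m)

/-- `γ`, cyclically shifting `k ↦ k+1` on the elements with `ℓ` in the lower half,
fixing the rest. -/
def gamma (n m : ℕ) : Equiv.Perm (Fin n × Fin m) where
  toFun x := if m / 2 ≤ (x.2 : ℕ) then (finRotate n x.1, x.2) else x
  invFun x := if m / 2 ≤ (x.2 : ℕ) then ((finRotate n).symm x.1, x.2) else x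
  left_inv := by
    intro x
    by_cases h : m / 2 ≤ (x.2 : ℕ) <;> simp [h, -finRotate_apply, -finRotate_symm_apply]
  right_inv := by
    intro x
    by_cases h : m / 2 ≤ (x.2 : ℕ) <;> simp [h, -finRotate_apply, -finRotate_symm_apply]

/-- `g_A = γ⁻¹ g_B γ`. -/
def gA (n m : ℕ) : Equiv.Perm (Fin n × Fin m) :=
  (gamma n m)⁻¹ * gB n m * gamma n m

/-- For even `m`, `Fin m` splits into an upper and a lower half. -/
def halfEquiv (m : ℕ) (hm : m % 2 = 0) : Fin 2 × Fin (m / 2) ≃ Fin m :=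
  finProdFinEquiv.trans (finCongr (by omega))

/-- `X`, the product of the `2n` disjoint `(m/2)`-cycles cyclically permuting the
upper and the lower half of each block `k`. -/
def Xel (n m : ℕ) (hm : m % 2 = 0) : Equiv.Perm (Fin n × Fin m) :=
  Equiv.prodCongr (Equiv.refl (Fin n))
    ((halfEquiv m hm).permCongr
      (Equiv.prodCongr (Equiv.refl (Fin 2)) (finRotate (m / 2))))

/-- The set of blocks of `P(X)`; it has `2n` elements. -/
abbrev BX (n m : ℕ) (hm : m % 2 = 0) := Quotient (orbitSetoid (Xel n m hm))

/-- `q_A = q_X(g_A) ∈ P_{2n}`. -/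
def qAel (n m : ℕ) (hm : m % 2 = 0) : Setoid (BX n m hm) :=
  qc (Xel n m hm) (gA n m)

/-- `q_B = q_X(g_B) ∈ P_{2n}`. -/
def qBel (n m : ℕ) (hm : m % 2 = 0) : Setoid (BX n m hm) :=
  qc (Xel n m hm) (gB n m)

/-! ## Doubled elements (two copies) -/

/-- Two copies of the index set `{1,…,mn}`. -/
abbrev DIdx (n m : ℕ) := (Fin n × Fin m) ⊕ (Fin n × Fin m)

/-- `g̃_A = g_A ⊕ g_A`. -/
def gAt (n m : ℕ) : Equiv.Perm (DIdx n m) := Equiv.sumCongr (gA n m) (gA n m)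

/-- `g̃_B = g_B ⊕ g_B`. -/
def gBt (n m : ℕ) : Equiv.Perm (DIdx n m) := Equiv.sumCongr (gB n m) (gB n m)

/-- `X̃ = X ⊕ X`. -/
def Xt (n m : ℕ) (hm : m % 2 = 0) : Equiv.Perm (DIdx n m) :=
  Equiv.sumCongr (Xel n m hm) (Xel n m hm)

/-- The set of blocks of `P(X̃)`; it has `4n` elements. -/
abbrev BXt (n m : ℕ) (hm : m % 2 = 0) := Quotient (orbitSetoid (Xt n m hm))

/-- `q̃_A = q_{X̃}(g̃_A) ∈ P_{4n}`. -/
def qAt (n m : ℕ) (hm : m % 2 = 0) : Setoid (BXt n m hm) :=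
  qc (Xt n m hm) (gAt n m)

/-- `q̃_B = q_{X̃}(g̃_B) ∈ P_{4n}`. -/
def qBt (n m : ℕ) (hm : m % 2 = 0) : Setoid (BXt n m hm) :=
  qc (Xt n m hm) (gBt n m)

/-- A block of `P(X̃)` lies in the first copy. -/
def inCopy1 {n m : ℕ} {hm : m % 2 = 0} (u : BXt n m hm) : Prop :=
  ∃ x, Quotient.mk (orbitSetoid (Xt n m hm)) (Sum.inl x) = u

/-- `#₁⁽¹⁾(q)`: the number of singlets of `q` among the first-copy positions. -/
def nS1 {n m : ℕ} {hm : m % 2 = 0} (q : Setoid (BXt n m hm)) : ℤ :=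
  Nat.card {u : BXt n m hm // IsSinglet q u ∧ inCopy1 u}

/-- `#₁⁽²⁾(q)`: the number of singlets of `q` among the second-copy positions. -/
def nS2 {n m : ℕ} {hm : m % 2 = 0} (q : Setoid (BXt n m hm)) : ℤ :=
  Nat.card {u : BXt n m hm // IsSinglet q u ∧ ¬ inCopy1 u}

/-- `τ ∈ P_{4n}`, the two-block partition separating the two copies. -/
def tau (n m : ℕ) (hm : m % 2 = 0) : Setoid (BXt n m hm) where
  r u v := inCopy1 u ↔ inCopy1 v
  iseqv := ⟨fun _ => Iff.rfl, Iff.symm, Iff.trans⟩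

/-! ## Graphs, cuts and optimization programs -/

variable {V : Type*}

/-- Sum of an edge function along (the edge list of) a walk, with multiplicity. -/
def wkSum {β : Type*} [AddCommMonoid β] {G : SimpleGraph V} {x y : V}
    (f : Sym2 V → β) (L : G.Walk x y) : β :=
  (L.edges.map f).sum

variable [Fintype V]

/-- Sum of an edge weight function over a set of edges. -/
def wsum (f : Sym2 V → ℝ) (S : Set (Sym2 V)) : ℝ :=
  ∑ e ∈ Finset.univ.filter (· ∈ S), f e

/-- The cut surface `μ(r)`: edges of `G` with one endpoint in `r`, the other outside. -/
def mu (G : SimpleGraph V) (r : Set V) : Set (Sym2 V) :=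
  {e | e ∈ G.edgeSet ∧ ∃ x y, e = s(x, y) ∧ x ∈ r ∧ y ∉ r}

/-- `μ(r₁:r₂)`: edges of `G` with an endpoint in `r₁` and an endpoint in `r₂`. -/
def mu2 (G : SimpleGraph V) (r₁ r₂ : Set V) : Set (Sym2 V) :=
  {e | e ∈ G.edgeSet ∧ ∃ x y, e = s(x, y) ∧ x ∈ r₁ ∧ y ∈ r₂}

/-- `r` is a cut for `X : Y`. -/
def IsCut (X Y r : Set V) : Prop := X ⊆ r ∧ Y ⊆ rᶜ

/-- The minimal cut area `𝒜(X:Y)`. -/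
def minCut (G : SimpleGraph V) (w : Sym2 V → ℝ) (X Y : Set V) : ℝ :=
  sInf {a | ∃ r : Set V, IsCut X Y r ∧ a = wsum w (mu G r)}

/-- `(α,β,γ)` is a triway cut for `(A,B,C)`. -/
def IsTriway (A B C α β γ : Set V) : Prop :=
  α ∪ β ∪ γ = Set.univ ∧ Disjoint α β ∧ Disjoint β γ ∧ Disjoint α γ ∧
    A ⊆ α ∧ B ⊆ β ∧ C ⊆ γ

/-- The area of a triway cut with tensions `(t_{A:B}, t_{B:C}, t_{C:A})`. -/
def triArea (G : SimpleGraph V) (w : Sym2 V → ℝ) (tAB tBC tCA : ℝ)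
    (α β γ : Set V) : ℝ :=
  tAB * wsum w (mu2 G α β) + tBC * wsum w (mu2 G β γ) + tCA * wsum w (mu2 G γ α)

/-- The minimal triway cut area `𝒜_t(A:B:C)`. -/
def triCut (G : SimpleGraph V) (w : Sym2 V → ℝ) (tAB tBC tCA : ℝ)
    (A B C : Set V) : ℝ :=
  sInf {a | ∃ α β γ : Set V, IsTriway A B C α β γ ∧ a = triArea G w tAB tBC tCA α β γ}

/-- Boundary data: `∂ = A ⊔ B ⊔ C` (pairwise disjoint). -/
def Bdy (A B C : Set V) : Prop := Disjoint A B ∧ Disjoint A C ∧ Disjoint B C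

/-! ### The permutation optimization `R` -/

/-- The symmetric edge function induced by the Cayley distance of a vertex
configuration of permutations. -/
def permE {ι : Type*} [Fintype ι] (g : V → Equiv.Perm ι) : Sym2 V → ℝ :=
  Sym2.lift ⟨fun x y => (cayley (g x) (g y) : ℝ),
    fun x y => congrArg Int.cast (cayley_comm (g x) (g y))⟩

/-- The free energy `R(g) = Σ_e w(e) d(g(x),g(y))`. -/
def Renergy {ι : Type*} [Fintype ι] (G : SimpleGraph V) (w : Sym2 V → ℝ)
    (g : V → Equiv.Perm ι) : ℝ :=
  wsum (fun e => w e * permE g e) G.edgeSet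

/-- The optimal value `R` of the permutation optimization. -/
def Rval {ι : Type*} [Fintype ι] (G : SimpleGraph V) (w : Sym2 V → ℝ)
    (A B C : Set V) (g₁ g₂ : Equiv.Perm ι) : ℝ :=
  sInf {a | ∃ g : V → Equiv.Perm ι,
    (∀ v ∈ A, g v = g₁) ∧ (∀ v ∈ B, g v = g₂) ∧ (∀ v ∈ C, g v = 1) ∧
    a = Renergy G w g}

/-! ### The set-partition optimization `Q` -/

/-- The symmetric integer edge function induced by the partition distance of a vertex
configuration of partitions. -/
def partEZ {κ : Type*} (q : V → Setoid κ) : Sym2 V → ℤ :=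
  Sym2.lift ⟨fun x y => pdist (q x) (q y), fun x y => pdist_comm (q x) (q y)⟩

/-- The free energy `Q(q) = Σ_e w(e) d(q(x),q(y))`. -/
def Qenergy {κ : Type*} (G : SimpleGraph V) (w : Sym2 V → ℝ)
    (q : V → Setoid κ) : ℝ :=
  wsum (fun e => w e * (partEZ q e : ℝ)) G.edgeSet

/-- The optimal value `Q` of the set-partition optimization. -/
def Qval {κ : Type*} (G : SimpleGraph V) (w : Sym2 V → ℝ)
    (A B C : Set V) (q₁ q₂ : Setoid κ) : ℝ :=
  sInf {a | ∃ q : V → Setoid κ,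
    (∀ v ∈ A, q v = q₁) ∧ (∀ v ∈ B, q v = q₂) ∧ (∀ v ∈ C, q v = ⊥) ∧
    a = Qenergy G w q}

/-! ### The Boolean optimization `B` -/

/-- The Hamming distance between two bit strings. -/
def ham {κ : Type*} [Fintype κ] (b₁ b₂ : κ → Bool) : ℤ :=
  ∑ k : κ, if b₁ k = b₂ k then 0 else 1

/-- The bit string `b(q)` of a partition: `false` exactly at singlets. -/
def bvec {κ : Type*} (p : Setoid κ) : κ → Bool :=
  fun u => if IsSinglet p u then false else true

/-- Feasibility of `r` for the Boolean program at configuration `b`. -/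
def Bfeas {κ : Type*} [Fintype κ] (G : SimpleGraph V) (A B : Set V) (n : ℕ)
    (b : V → κ → Bool) (r : Sym2 V → ℕ) : Prop :=
  (∀ x ∈ A, ∀ y ∈ B, ∀ L : G.Walk x y,
    2 ∣ wkSum (fun e => (r e : ℤ)) L ∧
    wkSum (fun e => (r e : ℤ)) L ≥
      2 * ((n : ℤ) - if ∀ v ∈ L.support, ∀ k, b v k = true then 1 else 0)) ∧
  (∀ x y : V, G.Adj x y → (r s(x, y) : ℤ) ≥ ⌈(ham (b x) (b y) : ℚ) / 2⌉)

/-- The inner Boolean optimum `B(b)` at a fixed Boolean configuration `b`. -/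
def BvalAt {κ : Type*} [Fintype κ] (G : SimpleGraph V) (w : Sym2 V → ℝ)
    (A B : Set V) (n : ℕ) (b : V → κ → Bool) : ℝ :=
  sInf {a | ∃ r : Sym2 V → ℕ, Bfeas G A B n b r ∧
    a = wsum (fun e => w e * (r e : ℝ)) G.edgeSet}

/-- The optimal value `B` of the Boolean optimization. -/
def Bval (κ : Type*) [Fintype κ] (G : SimpleGraph V) (w : Sym2 V → ℝ)
    (A B C : Set V) (n : ℕ) : ℝ :=
  sInf {a | ∃ b : V → κ → Bool,
    (∀ v ∈ A ∪ B, ∀ k, b v k = true) ∧ (∀ v ∈ C, ∀ k, b v k = false) ∧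
    ∃ r : Sym2 V → ℕ, Bfeas G A B n b r ∧
      a = wsum (fun e => w e * (r e : ℝ)) G.edgeSet}

/-! ### The integer program `I` -/

/-- Feasibility of `(ρ,σ)` for the integer program. -/
def IPfeas (G : SimpleGraph V) (A B C : Set V) (n : ℕ) (ρ σ : Sym2 V → ℕ) : Prop :=
  (∀ x ∈ A, ∀ y ∈ B, ∀ L : G.Walk x y,
    2 ∣ wkSum (fun e => (σ e : ℤ) + (ρ e : ℤ)) L ∧
    wkSum (fun e => (σ e : ℤ) + (ρ e : ℤ)) L ≥
      2 * ((n : ℤ) - if wkSum (fun e => (ρ e : ℤ)) L = 0 then 1 else 0)) ∧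
  (∀ x ∈ A ∪ B, ∀ y ∈ C, ∀ L : G.Walk x y,
    wkSum (fun e => (ρ e : ℤ)) L ≥ (n : ℤ))

/-- The objective of the integer program. -/
def IPobj (G : SimpleGraph V) (w : Sym2 V → ℝ) (ρ σ : Sym2 V → ℕ) : ℝ :=
  wsum (fun e => w e * ((σ e : ℝ) + (ρ e : ℝ))) G.edgeSet

/-- The optimal value `I` of the integer program. -/
def Ival (G : SimpleGraph V) (w : Sym2 V → ℝ) (A B C : Set V) (n : ℕ) : ℝ :=
  sInf {a | ∃ ρ σ : Sym2 V → ℕ, IPfeas G A B C n ρ σ ∧ a = IPobj G w ρ σ}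

/-! ### The ℓ-intersecting cut problem `M` -/

/-- Feasibility for the `ℓ`-intersecting cut problem with boundary sets
`Γ₀, …, Γ_ℓ` and `C`, for a half-integer valued `ϱ`. -/
def Mfeas (G : SimpleGraph V) (Γ : ℕ → Set V) (ℓ : ℕ) (C : Set V)
    (ϱ : Sym2 V → ℚ) : Prop :=
  (∀ e, ∃ j : ℕ, ϱ e = (j : ℚ) / 2) ∧
  (∀ k k' : ℕ, k ≤ ℓ → k' ≤ ℓ → ∀ x ∈ Γ k, ∀ y ∈ Γ k', ∀ L : G.Walk x y,
    ∃ j : ℕ, wkSum ϱ L = |(k : ℚ) - (k' : ℚ)| + (j : ℚ)) ∧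
  (∀ k : ℕ, k ≤ ℓ → ∀ x ∈ Γ k, ∀ y ∈ C, ∀ L : G.Walk x y,
    ∃ j : ℕ, wkSum ϱ L = (ℓ : ℚ) / 2 + (j : ℚ))

/-- The objective of the `ℓ`-intersecting cut problem. -/
def Mobj (G : SimpleGraph V) (w : Sym2 V → ℝ) (ϱ : Sym2 V → ℚ) : ℝ :=
  wsum (fun e => w e * (ϱ e : ℝ)) G.edgeSet

/-- The optimal value `M` of the `ℓ`-intersecting cut problem. -/
def Mval (G : SimpleGraph V) (w : Sym2 V → ℝ) (Γ : ℕ → Set V) (ℓ : ℕ)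
    (C : Set V) : ℝ :=
  sInf {a | ∃ ϱ : Sym2 V → ℚ, Mfeas G Γ ℓ C ϱ ∧ a = Mobj G w ϱ}

/-- The complementary reduced graph `G^c`: the edges of `G` not lying entirely
inside `V'`. -/
def reducedGraph (G : SimpleGraph V) (V' : Set V) : SimpleGraph V where
  Adj x y := G.Adj x y ∧ ¬ (x ∈ V' ∧ y ∈ V')
  symm := by
    constructor
    intro x y h
    exact ⟨h.1.symm, fun hc => h.2 ⟨hc.2, hc.1⟩⟩
  loopless := by
    constructor
    intro x h
    exact G.loopless.irrefl x h.1

end RTN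

namespace RTN

open Equiv Equiv.Perm

variable {α : Type*}

/-! ### Counting blocks -/

section BlockCount

variable [Finite α] {p q : Setoid α}

omit [Finite α] in
lemma quotient_map'_id_surjective (h : p ≤ q) :
    Function.Surjective (Quotient.map' id h : Quotient p → Quotient q) :=
  Function.Surjective.of_comp (g := Quotient.mk p) Quotient.mk_surjective

lemma nb_le_nb_of_le (h : p ≤ q) : nb q ≤ nb p := by
  unfold nb
  exact_mod_cast Nat.card_le_card_of_surjective _ (quotient_map'_id_surjective h)

lemma eq_of_le_of_nb_le (h : p ≤ q) (hc : nb p ≤ nb q) : p = q := by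
  have hinj : Function.Injective (Quotient.map' id h : Quotient p → Quotient q) :=
    ((quotient_map'_id_surjective h).bijective_of_nat_card_le (by unfold nb at hc; omega)).1
  exact le_antisymm h fun x y hxy => Quotient.exact (hinj (Quotient.sound hxy))

lemma nb_lt_nb_of_lt (h : p < q) : nb q < nb p :=
  (nb_le_nb_of_le h.le).lt_of_ne fun hc => h.ne (eq_of_le_of_nb_le h.le hc.ge)

omit [Finite α] in
lemma nb_bot : nb (⊥ : Setoid α) = Nat.card α := by
  unfold nb
  exact_mod_cast Nat.card_congr Setoid.quotientBotEquiv

lemma nb_le_card (p : Setoid α) : nb p ≤ Nat.card α :=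
  nb_bot (α := α) ▸ nb_le_nb_of_le bot_le

end BlockCount

lemma nb_ker {β : Type*} {f : α → β} (hf : Function.Surjective f) :
    nb (Setoid.ker f) = Nat.card β := by
  unfold nb
  exact_mod_cast Nat.card_congr (Setoid.quotientKerEquivOfSurjective f hf)

lemma orbitSetoid_le_iff {S : Setoid α} {g : Perm α} :
    orbitSetoid g ≤ S ↔ ∀ x, S.r x (g x) := by
  refine ⟨fun h x => h ⟨1, by simp⟩, fun h => ?_⟩
  have step : ∀ (k : ℤ) (x : α), S.r x ((g ^ k) x) := by
    intro k
    induction k using Int.induction_on with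
    | zero => exact fun x => S.refl' x
    | succ i ih =>
      intro x
      rw [zpow_add_one, mul_apply]
      exact S.trans' (h x) (ih (g x))
    | pred i ih =>
      intro x
      have hx : S.r x (g⁻¹ x) := S.symm' (by simpa using h (g⁻¹ x))
      rw [zpow_sub_one, mul_apply]
      exact S.trans' hx (ih (g⁻¹ x))
  rintro x y ⟨k, rfl⟩
  exact step k x

lemma orbitSetoid_mul_le (f g : Perm α) :
    orbitSetoid (f * g) ≤ orbitSetoid f ⊔ orbitSetoid g :=
  orbitSetoid_le_iff.2 fun x =>
    Setoid.trans' _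
      (le_sup_right (a := orbitSetoid f) (⟨1, by simp⟩ : (orbitSetoid g).r x (g x)))
      (le_sup_left (b := orbitSetoid g) (⟨1, by simp⟩ : (orbitSetoid f).r (g x) (f (g x))))

lemma orbitSetoid_one : orbitSetoid (1 : Perm α) = ⊥ :=
  Setoid.ext fun _ _ => sameCycle_one

lemma orbitSetoid_swap_le {S : Setoid α} {a b : α} (hab : S.r a b) :
    orbitSetoid (swap a b) ≤ S := by
  refine orbitSetoid_le_iff.2 fun x => ?_
  rcases eq_or_ne x a with rfl | hxa
  · simpa using hab
  rcases eq_or_ne x b with rfl | hxb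
  · simpa using S.symm' hab
  simp [swap_apply_of_ne_of_ne hxa hxb]

/-- Every block of `s` other than that of `b` survives in the join: the join lies below the
kernel of the map on blocks sending the block of `b` to that of `a`. -/
lemma nb_sub_one_le_nb_sup_swap [Finite α] (s : Setoid α) (a b : α) :
    nb s - 1 ≤ nb (s ⊔ orbitSetoid (swap a b)) := by
  have := Fintype.ofFinite α
  let π := Quotient.mk s
  let f : α → Quotient s := fun x => if π x = π b then π a else π x
  have hker : s ⊔ orbitSetoid (swap a b) ≤ Setoid.ker f := by
    refine sup_le (fun x y hxy => ?_) (orbitSetoid_le_iff.2 fun x => ?_)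
    · simp only [Setoid.ker_def, f, π, Quotient.sound hxy]
    · rw [Setoid.ker_def, swap_apply_def]
      split_ifs <;> simp_all [f]
  have hrange : ({π b}ᶜ : Set (Quotient s)) ⊆ Set.range f := by
    intro u hu
    obtain ⟨x, rfl⟩ := Quotient.exists_rep u
    exact ⟨x, if_neg hu⟩
  have hcard : nb s - 1 ≤ nb (Setoid.ker f) := by
    have := Set.ncard_le_ncard hrange
    rw [Set.ncard_compl, Set.ncard_singleton] at this
    unfold nb
    rw [Nat.card_congr (Setoid.quotientKerEquivRange f), Nat.card_coe_set_eq]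
    omega
  exact hcard.trans (nb_le_nb_of_le hker)

/-! ### Transpositions and the cycle potential -/

/-- If `a` and `b` lie in different cycles of `h`, then `swap a b * h` agrees with `h` along the
cycle of `a` up to its last point `h⁻¹ a`, which it sends to `b`. -/
lemma sameCycle_or_sameCycle_swap_mul [Finite α] (h : Perm α) (a b : α) :
    h.SameCycle a b ∨ (swap a b * h).SameCycle a b := by
  by_contra! ⟨hh, hτh⟩
  have agree : ∀ j : ℕ, ((swap a b * h) ^ j) a = (h ^ j) a := by
    intro j
    induction j with
    | zero => rfl
    | succ j ih =>
      rw [pow_succ', pow_succ', Perm.mul_apply, Perm.mul_apply, ih, Perm.mul_apply]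
      refine swap_apply_of_ne_of_ne (fun ha => hτh ⟨(j + 1 : ℕ), ?_⟩)
        fun hb => hh ⟨(j + 1 : ℕ), ?_⟩
      · rw [zpow_natCast, pow_succ', mul_apply, ih, mul_apply, ha, swap_apply_left]
      · rw [zpow_natCast, pow_succ', mul_apply, hb]
  obtain ⟨j, hj⟩ := (show h.SameCycle a (h⁻¹ a) from ⟨-1, by simp⟩).exists_nat_pow_eq
  refine hτh ⟨(j + 1 : ℕ), ?_⟩
  rw [zpow_natCast, pow_succ', mul_apply, agree, hj]
  simp

lemma cayley_nonneg [Fintype α] (g h : Perm α) : 0 ≤ cayley g h := by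
  have := nb_le_card (orbitSetoid (g * h⁻¹))
  rw [Nat.card_eq_fintype_card] at this
  unfold cayley ncyc
  omega

lemma cayley_self [Fintype α] (g : Perm α) : cayley g g = 0 := by
  rw [cayley, mul_inv_cancel, ncyc, orbitSetoid_one, nb_bot, Nat.card_eq_fintype_card, sub_self]

/-- `σ * swap a (σ a)` fixes `σ a`, splitting it off the cycle of `a`. -/
lemma ncyc_lt_ncyc_mul_swap [Finite α] {σ : Perm α} {a : α} (ha : σ a ≠ a) :
    ncyc σ < ncyc (σ * swap a (σ a)) := by
  have hfix : (σ * swap a (σ a)) (σ a) = σ a := by rw [mul_apply, swap_apply_right]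
  have hle : orbitSetoid (σ * swap a (σ a)) ≤ orbitSetoid σ :=
    (orbitSetoid_mul_le _ _).trans (sup_le le_rfl (orbitSetoid_swap_le ⟨1, by simp⟩))
  have hne : orbitSetoid (σ * swap a (σ a)) ≠ orbitSetoid σ := by
    intro heq
    have hrel : (orbitSetoid (σ * swap a (σ a))).r (σ a) a := heq ▸ ⟨-1, by simp⟩
    exact ha (SameCycle.eq_of_left hrel hfix)
  exact nb_lt_nb_of_lt (lt_of_le_of_ne hle hne)

lemma exists_cayley_swap_mul_lt [Fintype α] {g h : Perm α} (hgh : g ≠ h) :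
    ∃ a b, cayley g (swap a b * h) < cayley g h := by
  obtain ⟨a, ha⟩ : ∃ a, (g * h⁻¹) a ≠ a := not_forall.1 fun hall =>
    hgh (mul_inv_eq_one.1 (Equiv.ext hall))
  refine ⟨a, (g * h⁻¹) a, ?_⟩
  have hsplit := ncyc_lt_ncyc_mul_swap ha
  rw [← swap_inv, mul_assoc, ← mul_inv_rev] at hsplit
  unfold cayley
  omega

def cyclePotential (Q : Setoid α) (g : Perm α) : ℤ :=
  ncyc g - 2 * nb (orbitSetoid g ⊔ Q)

/-- With `s = P(h)`, `s' = P(swap a b * h)` and `t = P(swap a b)`, each of `s, s'` lies below the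
join of the other with `t`, and `t` lies below one of them. -/
lemma cyclePotential_le_swap_mul [Finite α] (Q : Setoid α) (h : Perm α) (a b : α) :
    cyclePotential Q h ≤ cyclePotential Q (swap a b * h) + 1 := by
  unfold cyclePotential ncyc
  set s := orbitSetoid h
  set s' := orbitSetoid (swap a b * h)
  set t := orbitSetoid (swap a b)
  have hs' : s' ≤ s ⊔ t := (orbitSetoid_mul_le _ _).trans_eq (sup_comm _ _)
  have hs : s ≤ s' ⊔ t := by
    have := orbitSetoid_mul_le (swap a b) (swap a b * h)
    rwa [swap_mul_self_mul, sup_comm] at this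
  rcases sameCycle_or_sameCycle_swap_mul h a b with hab | hab
  · have hle : s' ≤ s := hs'.trans (sup_le le_rfl (orbitSetoid_swap_le hab))
    rcases hle.eq_or_lt with heq | hlt
    · rw [heq]
      omega
    have hsplit := nb_lt_nb_of_lt hlt
    have hmerge : nb (s' ⊔ Q) - 1 ≤ nb (s ⊔ Q) :=
      (nb_sub_one_le_nb_sup_swap _ a b).trans <| nb_le_nb_of_le <|
        sup_le (hs.trans (sup_le_sup_right le_sup_left t)) (le_sup_right.trans le_sup_left)
    omega
  · have hle : s ≤ s' := hs.trans (sup_le le_rfl (orbitSetoid_swap_le hab))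
    have hjoin : nb (s' ⊔ Q) ≤ nb (s ⊔ Q) := nb_le_nb_of_le (sup_le_sup_right hle Q)
    have hmerge : nb s - 1 ≤ nb s' :=
      (nb_sub_one_le_nb_sup_swap s a b).trans (nb_le_nb_of_le hs')
    omega

lemma cyclePotential_sub_le_cayley [Fintype α] (Q : Setoid α) (g h : Perm α) :
    cyclePotential Q h - cyclePotential Q g ≤ cayley g h := by
  suffices ∀ N : ℕ, ∀ h, cayley g h < N →
      cyclePotential Q h - cyclePotential Q g ≤ cayley g h
    from this ((cayley g h).toNat + 1) h (by omega)
  intro N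
  induction N with
  | zero => exact fun h hN => absurd hN (not_lt.2 (cayley_nonneg g h))
  | succ N ih =>
    intro h hN
    rcases eq_or_ne g h with rfl | hgh
    · simp [cayley_self]
    obtain ⟨a, b, hlt⟩ := exists_cayley_swap_mul_lt hgh
    have := ih (swap a b * h) (by omega)
    have := cyclePotential_le_swap_mul Q h a b
    omega

/-! ### Coarse graining -/

lemma nb_comap_of_surjective {β : Type*} {f : α → β} (hf : Function.Surjective f)
    (c : Setoid β) : nb (c.comap f) = nb c := by
  unfold nb
  rw [Nat.card_congr (Setoid.comapQuotientEquiv f c),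
    (Quotient.mk_surjective.comp hf).range_eq, Nat.card_univ]

lemma le_of_comap_mk_le {s : Setoid α} {c c' : Setoid (Quotient s)}
    (h : c.comap (Quotient.mk s) ≤ c'.comap (Quotient.mk s)) : c ≤ c' := by
  intro u v huv
  induction u using Quotient.ind
  induction v using Quotient.ind
  exact h huv

section CoarseGraining

variable (g₀ : Perm α)

lemma comap_coarse (p : Setoid α) :
    (coarse g₀ p).comap (Quotient.mk (orbitSetoid g₀)) = p ⊔ orbitSetoid g₀ := by
  ext x y
  refine ⟨fun ⟨x', y', hx, hy, hxy⟩ => ?_, fun hxy => ⟨x, y, rfl, rfl, hxy⟩⟩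
  have hx' : (p ⊔ orbitSetoid g₀).r x x' := le_sup_right (a := p) (Quotient.exact hx.symm)
  have hy' : (p ⊔ orbitSetoid g₀).r y' y := le_sup_right (a := p) (Quotient.exact hy)
  exact Setoid.trans' _ (Setoid.trans' _ hx' hxy) hy'

lemma nb_coarse [Finite α] (p : Setoid α) : nb (coarse g₀ p) = nb (p ⊔ orbitSetoid g₀) := by
  rw [← comap_coarse, nb_comap_of_surjective Quotient.mk_surjective]

lemma coarse_mono {p p' : Setoid α} (h : p ≤ p') : coarse g₀ p ≤ coarse g₀ p' :=
  fun _ _ ⟨x, y, hx, hy, hxy⟩ => ⟨x, y, hx, hy, sup_le_sup_right h _ hxy⟩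

lemma coarse_sup (p p' : Setoid α) :
    coarse g₀ p ⊔ coarse g₀ p' = coarse g₀ (p ⊔ p') := by
  refine le_antisymm (sup_le (coarse_mono g₀ le_sup_left) (coarse_mono g₀ le_sup_right)) ?_
  refine le_of_comap_mk_le ?_
  rw [comap_coarse]
  have hcomap : ∀ c ≤ coarse g₀ p ⊔ coarse g₀ p',
      c.comap (Quotient.mk _) ≤ (coarse g₀ p ⊔ coarse g₀ p').comap (Quotient.mk _) :=
    fun _ hc _ _ hxy => hc hxy
  refine sup_le (sup_le ?_ ?_) fun x y hxy => ?_
  · exact le_sup_left.trans ((comap_coarse g₀ p).ge.trans (hcomap _ le_sup_left))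
  · exact le_sup_left.trans ((comap_coarse g₀ p').ge.trans (hcomap _ le_sup_right))
  · simp [Setoid.comap_rel, Quotient.sound hxy]

lemma coarse_bot : coarse g₀ ⊥ = ⊥ := by
  refine le_bot_iff.1 (le_of_comap_mk_le ?_)
  rw [comap_coarse, bot_sup_eq]
  exact fun x y hxy => Quotient.sound hxy

end CoarseGraining

lemma pdist_nonneg [Finite α] (p q : Setoid α) : 0 ≤ pdist p q := by
  have := nb_le_nb_of_le (le_sup_left : p ≤ p ⊔ q)
  have := nb_le_nb_of_le (le_sup_right : q ≤ p ⊔ q)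
  unfold pdist
  omega

lemma pdist_self (p : Setoid α) : pdist p p = 0 := by
  rw [pdist, sup_idem]
  ring

lemma qc_one (g₀ : Perm α) : qc g₀ 1 = ⊥ := by
  rw [qc, orbitSetoid_one, coarse_bot]

lemma pdist_qc_qc [Finite α] (g₀ g h : Perm α) :
    pdist (qc g₀ g) (qc g₀ h) = nb (orbitSetoid g ⊔ orbitSetoid g₀) +
      nb (orbitSetoid h ⊔ orbitSetoid g₀) -
        2 * nb (orbitSetoid g ⊔ (orbitSetoid h ⊔ orbitSetoid g₀)) := by
  rw [pdist, qc, qc, coarse_sup, nb_coarse, nb_coarse, nb_coarse, sup_assoc]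

section CayleyExcess

variable [Fintype α] (g₀ : Perm α)

/-- The height whose level sets give the cuts: the part of the Cayley distance to the identity
that the coarse graining by `P(g₀)` does not see. -/
def cayleyExcess (g : Perm α) : ℤ := cayley g 1 - pdist (qc g₀ g) (qc g₀ 1)

lemma cayleyExcess_eq (g : Perm α) : cayleyExcess g₀ g =
    Fintype.card α - ncyc g - nb (orbitSetoid g₀) + nb (orbitSetoid g ⊔ orbitSetoid g₀) := by
  rw [cayleyExcess, cayley, inv_one, mul_one, qc_one, pdist, sup_bot_eq, nb_bot, qc, nb_coarse]
  simp only [nb]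
  ring

lemma cayleyExcess_one : cayleyExcess g₀ 1 = 0 := by
  rw [cayleyExcess, cayley_self, pdist_self, sub_self]

lemma cayleyExcess_of_le {g : Perm α} (h : orbitSetoid g₀ ≤ orbitSetoid g) :
    cayleyExcess g₀ g = Fintype.card α - nb (orbitSetoid g₀) := by
  rw [cayleyExcess_eq, sup_eq_left.2 h, ncyc]
  ring

/-- The two instances of `cyclePotential_sub_le_cayley`, with `Q = P(g) ⊔ P(g₀)` and with
`Q = P(h) ⊔ P(g₀)`, are the two halves of the absolute value. -/
lemma pdist_qc_add_abs_sub_le_cayley (g h : Perm α) :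
    pdist (qc g₀ g) (qc g₀ h) + |cayleyExcess g₀ g - cayleyExcess g₀ h| ≤ cayley g h := by
  have hg := cyclePotential_sub_le_cayley (orbitSetoid g ⊔ orbitSetoid g₀) g h
  have hh := cyclePotential_sub_le_cayley (orbitSetoid h ⊔ orbitSetoid g₀) h g
  simp only [cyclePotential, sup_left_idem] at hg hh
  rw [sup_left_comm] at hg
  rw [cayley_comm] at hh
  rw [pdist_qc_qc, cayleyExcess_eq, cayleyExcess_eq, ← le_sub_iff_add_le', abs_le]
  constructor <;> omega

end CayleyExcess

/-! ### The standard elements -/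

lemma sameCycle_finRotate {m : ℕ} (i j : Fin m) : (finRotate m).SameCycle i j := by
  rcases lt_or_ge m 2 with hm | hm
  · obtain rfl : i = j := by
      have := i.isLt
      have := j.isLt
      omega
    exact SameCycle.refl _ _
  · have hsupp := support_finRotate_of_le hm
    exact (isCycle_finRotate_of_le hm).sameCycle (mem_support.1 (hsupp ▸ Finset.mem_univ i))
      (mem_support.1 (hsupp ▸ Finset.mem_univ j))

lemma sameCycle_prodCongr_refl_iff {β γ : Type*} {σ : Perm γ} {u v : β × γ} :
    Perm.SameCycle (prodCongr (Equiv.refl β) σ) u v ↔ u.1 = v.1 ∧ σ.SameCycle u.2 v.2 := by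
  let φ : Perm γ →* Perm (β × γ) :=
    { toFun := prodCongr (Equiv.refl β)
      map_one' := rfl
      map_mul' := fun _ _ => rfl }
  have hpow (k : ℤ) : (prodCongr (Equiv.refl β) σ : Perm (β × γ)) ^ k =
      prodCongr (Equiv.refl β) (σ ^ k) := (map_zpow φ σ k).symm
  constructor
  · rintro ⟨k, rfl⟩
    rw [hpow]
    exact ⟨rfl, k, rfl⟩
  · rintro ⟨h1, k, hk⟩
    exact ⟨k, by rw [hpow]; exact Prod.ext h1 hk⟩

lemma sameCycle_permCongr_iff {β γ : Type*} (e : β ≃ γ) {ρ : Perm β} {x y : γ} :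
    (e.permCongr ρ).SameCycle x y ↔ ρ.SameCycle (e.symm x) (e.symm y) := by
  have hpow (k : ℤ) : e.permCongr ρ ^ k = e.permCongr (ρ ^ k) :=
    (map_zpow e.permCongrHom ρ k).symm
  constructor
  · rintro ⟨k, hk⟩
    refine ⟨k, ?_⟩
    rw [hpow, permCongr_apply] at hk
    rw [← hk, symm_apply_apply]
  · rintro ⟨k, hk⟩
    exact ⟨k, by rw [hpow, permCongr_apply, hk, apply_symm_apply]⟩

section StandardElements

variable {n m : ℕ}

lemma sameCycle_gB_iff {u v : Fin n × Fin m} : (gB n m).SameCycle u v ↔ u.1 = v.1 := by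
  simp [gB, sameCycle_prodCongr_refl_iff, sameCycle_finRotate]

lemma sameCycle_gA_iff {u v : Fin n × Fin m} :
    (gA n m).SameCycle u v ↔ (gamma n m u).1 = (gamma n m v).1 := by
  have : gA n m = (gamma n m)⁻¹ * gB n m * (gamma n m)⁻¹⁻¹ := by rw [inv_inv]; rfl
  rw [this, sameCycle_conj, inv_inv, sameCycle_gB_iff]

variable (hm : m % 2 = 0)

lemma sameCycle_Xel_iff {u v : Fin n × Fin m} :
    (Xel n m hm).SameCycle u v ↔
      u.1 = v.1 ∧ ((halfEquiv m hm).symm u.2).1 = ((halfEquiv m hm).symm v.2).1 := by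
  simp [Xel, sameCycle_prodCongr_refl_iff, sameCycle_permCongr_iff, sameCycle_finRotate]

lemma halfEquiv_symm_fst_val (ℓ : Fin m) :
    (((halfEquiv m hm).symm ℓ).1 : ℕ) = ℓ / (m / 2) := by
  simp [halfEquiv]

lemma orbitSetoid_Xel_le_gB : orbitSetoid (Xel n m hm) ≤ orbitSetoid (gB n m) :=
  fun _ _ huv => sameCycle_gB_iff.2 ((sameCycle_Xel_iff hm).1 huv).1

lemma orbitSetoid_Xel_le_gA : orbitSetoid (Xel n m hm) ≤ orbitSetoid (gA n m) := by
  intro u v huv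
  obtain ⟨h1, h2⟩ := (sameCycle_Xel_iff hm).1 huv
  have hhalf : m / 2 ≤ (u.2 : ℕ) ↔ m / 2 ≤ (v.2 : ℕ) := by
    have := congrArg Fin.val h2
    rw [halfEquiv_symm_fst_val, halfEquiv_symm_fst_val] at this
    rcases Nat.eq_zero_or_pos (m / 2) with h0 | h0
    · simp [h0]
    · rw [← Nat.one_le_div_iff h0, ← Nat.one_le_div_iff h0, this]
  refine sameCycle_gA_iff.2 ?_
  by_cases hu : m / 2 ≤ (u.2 : ℕ)
  · simp [gamma, hu, hhalf.1 hu, h1]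
  · simp [gamma, hu, mt hhalf.2 hu, h1]

lemma nb_orbitSetoid_Xel (hm2 : 2 ≤ m) : nb (orbitSetoid (Xel n m hm)) = 2 * n := by
  have hker : orbitSetoid (Xel n m hm) =
      Setoid.ker fun u : Fin n × Fin m => (u.1, ((halfEquiv m hm).symm u.2).1) :=
    Setoid.ext fun _ _ => by rw [Setoid.ker_def, Prod.ext_iff]; exact sameCycle_Xel_iff hm
  have hsurj :
      Function.Surjective fun u : Fin n × Fin m => (u.1, ((halfEquiv m hm).symm u.2).1) :=
    fun ⟨k, i⟩ => ⟨(k, halfEquiv m hm (i, ⟨0, by omega⟩)), by simp⟩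
  rw [hker, nb_ker hsurj]
  simp [mul_comm]

lemma cayleyExcess_Xel_of_le (hm2 : 2 ≤ m) {g : Perm (Fin n × Fin m)}
    (h : orbitSetoid (Xel n m hm) ≤ orbitSetoid g) :
    cayleyExcess (Xel n m hm) g = (n * (m - 2) : ℕ) := by
  rw [cayleyExcess_of_le _ h, nb_orbitSetoid_Xel hm hm2, Fintype.card_prod, Fintype.card_fin,
    Fintype.card_fin]
  push_cast [Nat.cast_sub hm2]
  ring

end StandardElements

/-! ### Cuts and level sets -/

section Graph

variable {V : Type*} [Fintype V] {G : SimpleGraph V} {w : Sym2 V → ℝ}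

lemma wsum_nonneg (hw : ∀ e, 0 ≤ w e) (S : Set (Sym2 V)) : 0 ≤ wsum w S :=
  Finset.sum_nonneg fun e _ => hw e

lemma minCut_le (hw : ∀ e, 0 ≤ w e) {X Y r : Set V} (hr : IsCut X Y r) :
    minCut G w X Y ≤ wsum w (mu G r) :=
  csInf_le ⟨0, by rintro _ ⟨r, -, rfl⟩; exact wsum_nonneg hw _⟩ ⟨r, hr, rfl⟩

lemma wsum_mu_eq (r : Set V) : wsum w (mu G r) =
    ∑ e ∈ Finset.univ.filter (· ∈ G.edgeSet), if e ∈ mu G r then w e else 0 := by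
  rw [wsum, ← Finset.sum_filter, Finset.filter_filter]
  exact Finset.sum_congr (Finset.filter_congr fun e _ => ⟨fun he => ⟨he.1, he⟩, And.right⟩)
    fun _ _ => rfl

omit [Fintype V] in
lemma mk_mem_mu_iff {x y : V} (hxy : G.Adj x y) (r : Set V) :
    s(x, y) ∈ mu G r ↔ ¬ (x ∈ r ↔ y ∈ r) := by
  constructor
  · rintro ⟨-, x', y', he, hx', hy'⟩
    rcases Sym2.eq_iff.1 he with ⟨rfl, rfl⟩ | ⟨rfl, rfl⟩ <;> tauto
  · intro h
    by_cases hx : x ∈ r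
    · exact ⟨hxy, x, y, rfl, hx, fun hy => h (iff_of_true hx hy)⟩
    · exact ⟨hxy, y, x, Sym2.eq_swap, not_not.1 (fun hy => h (iff_of_false hx hy)), hx⟩

lemma card_filter_separating_le (I : Finset ℤ) (a b : ℤ) :
    ((I.filter fun t => ¬ (t ≤ a ↔ t ≤ b)).card : ℤ) ≤ |a - b| := by
  have hsub : (I.filter fun t => ¬ (t ≤ a ↔ t ≤ b)) ⊆ Finset.Ioc (min a b) (max a b) := by
    intro t ht
    rw [Finset.mem_filter] at ht
    rw [Finset.mem_Ioc]
    omega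
  have := Finset.card_le_card hsub
  rw [Int.card_Ioc, max_sub_min_eq_abs'] at this
  have := abs_nonneg (a - b)
  omega

/-- The levels `{φ ≥ t}`, `1 ≤ t ≤ T`, are cuts for `X : Y`, and an edge is cut by at most
`|φ x - φ y|` of them. -/
lemma mul_minCut_le_wsum (hw : ∀ e, 0 ≤ w e) {X Y : Set V} {φ : V → ℤ} {T : ℕ}
    (hX : ∀ v ∈ X, (T : ℤ) ≤ φ v) (hY : ∀ v ∈ Y, φ v ≤ 0) {D : Sym2 V → ℝ}
    (hD : ∀ x y, G.Adj x y → (|φ x - φ y| : ℝ) ≤ D s(x, y)) :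
    T * minCut G w X Y ≤ wsum (fun e => w e * D e) G.edgeSet := by
  set levels := Finset.Icc (1 : ℤ) T
  set E := Finset.univ.filter (· ∈ G.edgeSet)
  have hcut : ∀ t ∈ levels, minCut G w X Y ≤ wsum w (mu G {v | t ≤ φ v}) := by
    intro t ht
    rw [Finset.mem_Icc] at ht
    exact minCut_le hw ⟨fun v hv => ht.2.trans (hX v hv), fun v hv => by
      simp only [Set.mem_compl_iff, Set.mem_ofPred_eq, not_le]; linarith [hY v hv]⟩
  have hswap : ∑ t ∈ levels, wsum w (mu G {v | t ≤ φ v}) =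
      ∑ e ∈ E, w e * (levels.filter fun t => e ∈ mu G {v | t ≤ φ v}).card := by
    simp only [wsum_mu_eq]
    rw [Finset.sum_comm]
    refine Finset.sum_congr rfl fun e _ => ?_
    rw [← Finset.sum_filter, Finset.sum_const, nsmul_eq_mul, mul_comm]
  have hedge : ∀ e ∈ E,
      w e * (levels.filter fun t => e ∈ mu G {v | t ≤ φ v}).card ≤ w e * D e := by
    intro e he
    induction e with
    | _ x y =>
      have hxy : G.Adj x y := (Finset.mem_filter.1 he).2
      refine mul_le_mul_of_nonneg_left ?_ (hw _)
      have := card_filter_separating_le levels (φ x) (φ y)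
      simp only [mk_mem_mu_iff hxy, Set.mem_ofPred_eq]
      exact (Int.cast_le.2 this).trans (by push_cast; exact hD x y hxy)
  have hcard : (levels.card : ℝ) = T := by simp [levels]
  calc (T : ℝ) * minCut G w X Y = levels.card • minCut G w X Y := by
        rw [nsmul_eq_mul, hcard]
    _ ≤ ∑ t ∈ levels, wsum w (mu G {v | t ≤ φ v}) := Finset.card_nsmul_le_sum _ _ _ hcut
    _ = _ := hswap
    _ ≤ ∑ e ∈ E, w e * D e := Finset.sum_le_sum hedge
    _ = wsum (fun e => w e * D e) G.edgeSet := by unfold wsum E; congr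

end Graph

section Programs

variable {V : Type*} {A B C : Set V}

lemma exists_boundary_config (hbdy : Bdy A B C) {β : Type*} (a b c : β) :
    ∃ f : V → β, (∀ v ∈ A, f v = a) ∧ (∀ v ∈ B, f v = b) ∧ (∀ v ∈ C, f v = c) := by
  refine ⟨fun v => if v ∈ A then a else if v ∈ B then b else c, fun v hv => if_pos hv,
    fun v hv => ?_, fun v hv => ?_⟩
  · simp [hv, Set.disjoint_right.1 hbdy.1 hv]
  · simp [Set.disjoint_right.1 hbdy.2.1 hv, Set.disjoint_right.1 hbdy.2.2 hv]

variable [Fintype V] {G : SimpleGraph V} {w : Sym2 V → ℝ}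

lemma Qval_le_Qenergy {κ : Type*} [Finite κ] (hw : ∀ e, 0 ≤ w e) {q₁ q₂ : Setoid κ}
    {q : V → Setoid κ} (hA : ∀ v ∈ A, q v = q₁) (hB : ∀ v ∈ B, q v = q₂)
    (hC : ∀ v ∈ C, q v = ⊥) :
    Qval G w A B C q₁ q₂ ≤ Qenergy G w q := by
  refine csInf_le ⟨0, ?_⟩ ⟨q, hA, hB, hC, rfl⟩
  rintro _ ⟨q', -, -, -, rfl⟩
  refine Finset.sum_nonneg fun e _ => mul_nonneg (hw e) ?_
  induction e with
  | _ x y => exact_mod_cast pdist_nonneg (q' x) (q' y)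

lemma Renergy_eq_Qenergy_add {ι κ : Type*} [Fintype ι] (g : V → Perm ι)
    (q : V → Setoid κ) :
    Renergy G w g =
      Qenergy G w q + wsum (fun e => w e * (permE g e - partEZ q e)) G.edgeSet := by
  rw [Renergy, Qenergy, wsum, wsum, wsum, ← Finset.sum_add_distrib]
  exact Finset.sum_congr rfl fun _ _ => by ring

end Programs

end RTN

theorem R_ge_minCut_add_Q_general {V : Type*} [Fintype V] (G : SimpleGraph V)
    (w : Sym2 V → ℝ) (hw : ∀ e, 0 ≤ w e) (A B C : Set V) (hbdy : RTN.Bdy A B C)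
    {n m : ℕ} (hm2 : 2 ≤ m) (hm : m % 2 = 0) :
    RTN.Rval G w A B C (RTN.gA n m) (RTN.gB n m) ≥
      RTN.minCut G w (A ∪ B) C * ((n : ℝ) * ((m : ℝ) - 2)) +
      RTN.Qval G w A B C (RTN.qAel n m hm) (RTN.qBel n m hm) := by
  open RTN in
  obtain ⟨g₀, hg₀A, hg₀B, hg₀C⟩ := exists_boundary_config hbdy (gA n m) (gB n m) 1
  refine le_csInf ⟨_, g₀, hg₀A, hg₀B, hg₀C, rfl⟩ ?_
  rintro _ ⟨g, hgA, hgB, hgC, rfl⟩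
  set X := Xel n m hm
  have hQ : Qval G w A B C (qAel n m hm) (qBel n m hm) ≤ Qenergy G w fun v => qc X (g v) :=
    Qval_le_Qenergy hw (fun v hv => by rw [hgA v hv]; rfl) (fun v hv => by rw [hgB v hv]; rfl)
      fun v hv => by rw [hgC v hv, qc_one]
  have hcut : ((n * (m - 2) : ℕ) : ℝ) * minCut G w (A ∪ B) C ≤
      wsum (fun e => w e * (permE g e - partEZ (fun v => qc X (g v)) e)) G.edgeSet := by
    refine mul_minCut_le_wsum hw (φ := fun v => cayleyExcess X (g v)) ?_ ?_ fun x y _ => ?_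
    · rintro v (hv | hv)
      · rw [hgA v hv, cayleyExcess_Xel_of_le hm hm2 (orbitSetoid_Xel_le_gA hm)]
      · rw [hgB v hv, cayleyExcess_Xel_of_le hm hm2 (orbitSetoid_Xel_le_gB hm)]
    · intro v hv
      rw [hgC v hv, cayleyExcess_one]
    · have := pdist_qc_add_abs_sub_le_cayley X (g x) (g y)
      simp only [permE, partEZ, Sym2.lift_mk]
      rw [le_sub_iff_add_le']
      exact_mod_cast this
  rw [Renergy_eq_Qenergy_add g fun v => qc X (g v)]
  push_cast [Nat.cast_sub hm2] at hcut
  linarith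

/-- The permutation optimization dominates the set-partition
optimization: `R ≥ 𝒜(A∪B:C)·n(m-2) + Q`. -/
theorem R_ge_minCut_add_Q {V : Type*} [Fintype V] (G : SimpleGraph V)
    (w : Sym2 V → ℝ) (hw : ∀ e, 0 ≤ w e) (A B C : Set V) (hbdy : RTN.Bdy A B C)
    {n m : ℕ} (hn : 2 ≤ n) (hm2 : 2 ≤ m) (hm : m % 2 = 0) :
    RTN.Rval G w A B C (RTN.gA n m) (RTN.gB n m) ≥
      RTN.minCut G w (A ∪ B) C * ((n : ℝ) * ((m : ℝ) - 2)) +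
      RTN.Qval G w A B C (RTN.qAel n m hm) (RTN.qBel n m hm) :=
  R_ge_minCut_add_Q_general G w hw A B C hbdy hm2 hm
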